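/- Let R be a unital non-associative ring, G a monoid, π a G-derivation on R, and S = R[G;π] the Ore monoid ring. If a,b ∈ G and π^a_b is right R^G-linear, then its extension π̃^a_b : S → S is right S^G-linear, i.e. π̃^a_b(u·v) = π̃^a_b(u)·v for all u ∈ S and v ∈ S^G. -/
import Mathlib


open scoped Classical

/-! Common framework: Ore monoid rings `R[G;π]` over a unital non-associative ring `R`
and a monoid `G`.  A `G`-derivation `π = {π^a_b}` is encoded as a map
`π : G → R → (G →₀ R)`, where `π a r b = π^a_b(r)`; axiom (D0) (finite support in `b`)
is built into the `Finsupp` encoding.  The Ore monoid ring `S = R[G;π]` is the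
additive group `G →₀ R` of finitely supported formal sums `Σ r_a xᵃ`
(with `Finsupp.single a r` representing `r xᵃ`), equipped with the
multiplication `GDeriv.mul` below. -/

/-- A two-sided ideal with respect to a (possibly non-associative, non-unital)
multiplication `m` on an additive group `A`. -/
structure IsIdealWith {A : Type*} [AddCommGroup A] (m : A → A → A) (J : Set A) : Prop where
  zero_mem : (0 : A) ∈ J
  add_mem : ∀ {x y : A}, x ∈ J → y ∈ J → x + y ∈ J
  neg_mem : ∀ {x : A}, x ∈ J → -x ∈ J
  mul_mem_left : ∀ (r : A) {x : A}, x ∈ J → m r x ∈ J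
  mul_mem_right : ∀ {x : A} (r : A), x ∈ J → m x r ∈ J

/-- The subset `F` of `A` is a field with respect to the multiplication `m` with
identity `one`: it is a commutative unital subring in which every nonzero element
has a multiplicative inverse. -/
def IsFieldWith {A : Type*} [AddCommGroup A] (m : A → A → A) (one : A) (F : Set A) : Prop :=
  one ∈ F ∧ (∀ x ∈ F, ∀ y ∈ F, x + y ∈ F) ∧ (∀ x ∈ F, -x ∈ F) ∧
  (∀ x ∈ F, ∀ y ∈ F, m x y ∈ F) ∧ (∀ x ∈ F, ∀ y ∈ F, m x y = m y x) ∧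
  (∀ x ∈ F, x ≠ 0 → ∃ y ∈ F, m x y = one ∧ m y x = one)

/-- A `G`-derivation on `R`: axioms (D0)–(D4).  Here `π a r b` denotes `π^a_b(r)`,
and (D0) holds by the finite support of `π a r : G →₀ R`. -/
structure GDeriv (R : Type*) [NonAssocRing R] (G : Type*) [Monoid G] where
  /-- the family of maps; `π a r b = π^a_b(r)` -/
  π : G → R → (G →₀ R)
  /-- (D1): `π^e_e = id` and `π^e_a = 0` for `a ≠ e` -/
  d1 : ∀ r : R, π 1 r = Finsupp.single 1 r
  /-- (D2): `π^a_b(1) = δ_{a,b}` -/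
  d2 : ∀ a : G, π a (1 : R) = Finsupp.single a (1 : R)
  /-- (D3): each `π^a_b` is additive -/
  d3 : ∀ (a : G) (r s : R), π a (r + s) = π a r + π a s
  /-- (D4): `π^{ab}_c = Σ_{df = c} π^a_d ∘ π^b_f` -/
  d4 : ∀ (a b : G) (r : R),
    π (a * b) r = (π b r).sum fun f s => (π a s).sum fun d t => Finsupp.single (d * f) t

namespace GDeriv

variable {R : Type*} [NonAssocRing R] {G : Type*} [Monoid G] (P : GDeriv R G)

/-- The multiplication of the Ore monoid ring `S = R[G;π]` on `G →₀ R`: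
the biadditive extension of `(r xᵃ)(s xᵇ) = Σ_c r π^a_c(s) x^{cb}`. -/
noncomputable def mul (u v : G →₀ R) : G →₀ R :=
  u.sum fun a r => v.sum fun b s => (P.π a s).sum fun c t => Finsupp.single (c * b) (r * t)

/-- The multiplicative identity `1·xᵉ` of `S`. -/
noncomputable def one (_P : GDeriv R G) : G →₀ R := Finsupp.single 1 1

/-- `R^G = {r ∈ R : π^a_b(r) = δ_{a,b} r}`. -/
def fixed : Set R := {r | ∀ a : G, P.π a r = Finsupp.single a r}

/-- `S^G = Σ_a R^G xᵃ`, the elements of `S` all of whose coefficients lie in `R^G`. -/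
def fixedS : Set (G →₀ R) := {u | ∀ c : G, u c ∈ P.fixed}

/-- (D7): every `π^a_b` is left `R^G`-linear. -/
def LeftLinear : Prop := ∀ a b : G, ∀ s ∈ P.fixed, ∀ r : R, P.π a (s * r) b = s * P.π a r b

/-- (D8): every `π^a_b` is right `R^G`-linear. -/
def RightLinear : Prop := ∀ a b : G, ∀ r : R, ∀ s ∈ P.fixed, P.π a (r * s) b = P.π a r b * s

/-- `π` is strong if (D7) or (D8) holds. -/
def Strong : Prop := P.LeftLinear ∨ P.RightLinear

/-- (D6): `π^a_a = id_R` for all `a ∈ G` (i.e. `π` is unital). -/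
def Unital : Prop := ∀ (a : G) (r : R), P.π a r a = r

/-- `π` is commutative: `π^a_b ∘ π^c_d = π^c_d ∘ π^a_b`. -/
def Commutes : Prop := ∀ (a b c d : G) (r : R), P.π a (P.π c r d) b = P.π c (P.π a r b) d

/-- `π` is well-ordered: there is a well-order on `G` whose strict part `lt`
satisfies `π^a_b = 0` whenever `a ≺ b`. -/
def WellOrdered : Prop :=
  ∃ lt : G → G → Prop, IsWellOrder G lt ∧ ∀ a b : G, lt a b → ∀ r : R, P.π a r b = 0

/-- The extension `π̃^a_b : S → S`, `π̃^a_b(Σ_c r_c x^c) = Σ_c π^a_b(r_c) x^c`. -/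
noncomputable def ext (a b : G) (u : G →₀ R) : G →₀ R := u.sum fun c r => Finsupp.single c (P.π a r b)

/-- The commutator `[u,v] = uv - vu` in `S`. -/
noncomputable def commS (u v : G →₀ R) : G →₀ R := P.mul u v - P.mul v u

/-- The associator `(u,v,w) = (uv)w - u(vw)` in `S`. -/
noncomputable def assocS (u v w : G →₀ R) : G →₀ R := P.mul (P.mul u v) w - P.mul u (P.mul v w)

/-- The left nucleus `N_l(S)`. -/
def Nl : Set (G →₀ R) := {u | ∀ v w, P.assocS u v w = 0}

/-- The middle nucleus `N_m(S)`. -/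
def Nm : Set (G →₀ R) := {u | ∀ v w, P.assocS v u w = 0}

/-- The right nucleus `N_r(S)`. -/
def Nr : Set (G →₀ R) := {u | ∀ v w, P.assocS v w u = 0}

/-- The commuter `C(S)`. -/
def CS : Set (G →₀ R) := {u | ∀ v, P.mul u v = P.mul v u}

/-- The center `Z(S) = C(S) ∩ N_l(S) ∩ N_m(S) ∩ N_r(S)`. -/
def Z : Set (G →₀ R) := P.CS ∩ (P.Nl ∩ P.Nm ∩ P.Nr)

/-- `Z(S)^G = {s ∈ Z(S) : π̃^a_b(s) = δ_{a,b} s}`. -/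
def ZG : Set (G →₀ R) :=
  {s | s ∈ P.Z ∧ ∀ a b : G, P.ext a b s = if a = b then s else 0}

/-- `R` is `G`-simple: `{0}` and `R` are the only `G`-invariant ideals of `R`. -/
def RSimple : Prop :=
  ∀ J : Set R, IsIdealWith (· * ·) J → (∀ a b : G, ∀ r ∈ J, P.π a r b ∈ J) →
    J = {0} ∨ J = Set.univ

/-- `S` is `G`-simple: `{0}` and `S` are the only ideals of `S` invariant under all `π̃^a_b`. -/
def SSimple : Prop :=
  ∀ J : Set (G →₀ R), IsIdealWith P.mul J → (∀ a b : G, ∀ u ∈ J, P.ext a b u ∈ J) →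
    J = {0} ∨ J = Set.univ

end GDeriv

namespace GDeriv

variable {R : Type*} [NonAssocRing R] {G : Type*} [Monoid G] (P : GDeriv R G)

lemma pi_zero' (a : G) : P.π a 0 = 0 := by
  have h := P.d3 a 0 0
  rw [add_zero] at h
  exact (left_eq_add.mp h)

/-- `ext a b` as an additive monoid hom. -/
noncomputable def extHom (a b : G) : (G →₀ R) →+ (G →₀ R) where
  toFun := P.ext a b
  map_zero' := by simp [ext]
  map_add' := fun u v => by
    show GDeriv.ext P a b (u+v) = _
    unfold ext
    apply Finsupp.sum_add_index'
    · intro c; simp [P.pi_zero' a]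
    · intro c r s; rw [P.d3]; simp [Finsupp.single_add]

lemma ext_single (a b c : G) (r : R) :
    P.ext a b (Finsupp.single c r) = Finsupp.single c (P.π a r b) := by
  unfold ext
  apply Finsupp.sum_single_index
  simp [P.pi_zero' a]

/-- Multiplication when the right factor has fixed coefficients. -/
lemma mul_fixed (u v : G →₀ R) (hv : v ∈ P.fixedS) :
    P.mul u v = u.sum fun c r => v.sum fun d s =>
      Finsupp.single (c * d) (r * s) := by
  unfold mul
  refine Finsupp.sum_congr fun c _ => ?_
  refine Finsupp.sum_congr fun d hd => ?_
  rw [hv d c]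
  apply Finsupp.sum_single_index
  simp

end GDeriv

/-- If `a,b ∈ G` and `π^a_b` is right `R^G`-linear, then `π̃^a_b`
is right `S^G`-linear. -/
theorem stmt10 {R : Type*} [NonAssocRing R] {G : Type*} [Monoid G]
    (P : GDeriv R G) (a b : G)
    (h : ∀ r : R, ∀ s ∈ P.fixed, P.π a (r * s) b = P.π a r b * s) :
    ∀ u : G →₀ R, ∀ v ∈ P.fixedS,
      P.ext a b (P.mul u v) = P.mul (P.ext a b u) v := by
  intro u v hv
  rw [P.mul_fixed u v hv, P.mul_fixed _ v hv]
  have hE : P.ext a b = P.extHom a b := rfl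
  rw [hE]
  rw [map_finsuppSum]
  have hext : P.extHom a b u = u.sum fun c r => Finsupp.single c (P.π a r b) := rfl
  rw [hext, Finsupp.sum_sum_index]
  · refine Finsupp.sum_congr fun c hc => ?_
    rw [map_finsuppSum, Finsupp.sum_single_index]
    · refine Finsupp.sum_congr fun d hd => ?_
      show P.extHom a b (Finsupp.single (c * d) (u c * v d)) = _
      rw [show (P.extHom a b : (G →₀ R) → (G →₀ R)) = P.ext a b from rfl,
        P.ext_single, h (u c) (v d) (hv d)]
    · refine Finset.sum_eq_zero fun d hd => ?_
      simp
  · intro c; refine Finset.sum_eq_zero fun d hd => ?_; simp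
  · intro c r s
    rw [← Finsupp.sum_add]
    refine Finsupp.sum_congr fun d hd => ?_
    rw [add_mul, Finsupp.single_add]
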